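/- arXiv:0806.2362 — 2 statements merged into one kernel-verified Lean document; each statement's English description precedes it below -/
import Mathlib

section
/- Fix an integer g ≥ 1 and nonzero complex numbers α_1, …, α_g. Define a⃗ = (a_1, …, a_g) ∈ ℂ^g by a_i := (1/(2i−1))·Σ_{k=1}^{g} α_k^{−(2i−1)}. Then the formal power series ∏_{k=1}^{g}(1 − α_k^{−1} t) · exp(Σ_{i=1}^{g} a_i t^{2i−1}) ∈ ℂ[[t]] has vanishing coefficient of t^n for every odd n with n < 2g+1. -/
/-!
With `c_k = α_k⁻¹`, the product `F = ∏ (1 - c_k t) · exp s` satisfies the linear differential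
equation `F' = F · D`, where `D = s' - ∑ c_k / (1 - c_k t)` is the sum of the logarithmic
derivatives of the factors. The coefficient of `t^(2j)` in `D` is `(2j+1) a_(j+1) - ∑ c_k^(2j+1)`,
which the choice of `a` makes vanish for `j < g`. Comparing coefficients of `t^(2u)` in
`F' = F · D` then shows, by induction on `u`, that the odd coefficients of `F` vanish up to
`t^(2g-1)`.
-/

/-- `exp` of a formal power series (with zero constant term), defined coefficientwise:
the coefficient of `t^n` in `∑ₘ s^m / m!`.  (For `s` with zero constant term only the
terms with `m ≤ n` contribute.) -/
noncomputable def expPS (s : PowerSeries ℂ) : PowerSeries ℂ :=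
  PowerSeries.mk fun n => ∑ m ∈ Finset.range (n + 1),
    ((m.factorial : ℂ))⁻¹ * PowerSeries.coeff n (s ^ m)

/-- The series `∑_{i=1}^g a_i t^{2i-1}` (with `a : Fin g → ℂ`, `a i = a_{i+1}`). -/
noncomputable def genSer (g : ℕ) (a : Fin g → ℂ) : PowerSeries ℂ :=
  ∑ i : Fin g, PowerSeries.monomial (2 * (i : ℕ) + 1) (a i)

open PowerSeries

section

variable {R : Type*} [CommRing R]

theorem coeff_pow_eq_zero_of_lt {s : R⟦X⟧} (hs : constantCoeff s = 0) {n m : ℕ} (h : n < m) :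
    coeff n (s ^ m) = 0 :=
  coeff_of_lt_order n ((Nat.cast_lt.mpr h).trans_le (le_order_pow_of_constantCoeff_eq_zero m hs))

theorem mk_pow_mul_one_sub_C_mul_X (c : R) : PowerSeries.mk (c ^ ·) * (1 - C c * X) = 1 := by
  simpa [rescale_mk, rescale_X] using congrArg (rescale c) (mk_one_mul_one_sub_eq_one R)

theorem derivative_one_sub_C_mul_X (c : R) :
    d⁄dX R (1 - C c * X) = (1 - C c * X) * (-C c * PowerSeries.mk (c ^ ·)) := by
  have h : d⁄dX R (1 - C c * X) = -C c := by simp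
  linear_combination h + C c * mk_pow_mul_one_sub_C_mul_X c

end

theorem Derivation.map_prod_of_eq_mul {R A ι : Type*} [CommSemiring R] [CommSemiring A]
    [Algebra R A] (D : Derivation R A A) (s : Finset ι) {f d : ι → A}
    (h : ∀ i ∈ s, D (f i) = f i * d i) : D (∏ i ∈ s, f i) = (∏ i ∈ s, f i) * ∑ i ∈ s, d i := by
  classical
  induction s using Finset.induction with
  | empty => simp
  | insert i s hi ih =>
    rw [Finset.prod_insert hi, Finset.sum_insert hi, leibniz, smul_eq_mul, smul_eq_mul,
      h i (Finset.mem_insert_self i s), ih fun j hj => h j (Finset.mem_insert_of_mem hj)]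
    ring

theorem expPS_eq_subst_exp {s : ℂ⟦X⟧} (hs : constantCoeff s = 0) :
    expPS s = (exp ℂ).subst s := by
  ext n
  rw [expPS, coeff_mk, coeff_subst' (HasSubst.of_constantCoeff_zero' hs),
    finsum_eq_sum_of_support_subset (s := Finset.range (n + 1))]
  · simp [smul_eq_mul]
  · intro m hm
    by_contra hmn
    simp only [Finset.coe_range, Set.mem_Iio, not_lt] at hmn
    exact hm (by simp only [coeff_pow_eq_zero_of_lt hs (by omega : n < m), smul_zero])

theorem derivative_expPS {s : ℂ⟦X⟧} (hs : constantCoeff s = 0) :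
    d⁄dX ℂ (expPS s) = expPS s * d⁄dX ℂ s := by
  rw [expPS_eq_subst_exp hs, derivative_subst (HasSubst.of_constantCoeff_zero' hs), derivative_exp]

theorem coeff_odd_eq_zero_of_derivative_eq_mul {K : Type*} [Field K] [CharZero K] {F D : K⟦X⟧}
    (hF : d⁄dX K F = F * D) {g : ℕ} (hD : ∀ j < g, coeff (2 * j) D = 0) {n : ℕ} (hn : Odd n)
    (hng : n < 2 * g + 1) : coeff n F = 0 := by
  induction n using Nat.strong_induction_on with
  | _ n ih =>
    obtain ⟨u, rfl⟩ := hn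
    have hprod : coeff (2 * u) (F * D) = 0 := by
      rw [coeff_mul]
      refine Finset.sum_eq_zero fun p hp => ?_
      have hpu : p.1 + p.2 = 2 * u := Finset.HasAntidiagonal.mem_antidiagonal.mp hp
      rcases Nat.even_or_odd p.2 with ⟨j, hj⟩ | ⟨j, hj⟩
      · rw [hj, ← two_mul, hD j (by omega), mul_zero]
      · rw [ih p.1 (by omega) ⟨u - j - 1, by omega⟩ (by omega), zero_mul]
    have h : coeff (2 * u + 1) F * ((2 * u : ℕ) + 1 : K) = 0 := by
      rw [← coeff_derivative, hF, hprod]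
    exact (mul_eq_zero.mp h).resolve_right (Nat.cast_add_one_ne_zero _)

theorem constantCoeff_genSer (g : ℕ) (a : Fin g → ℂ) : constantCoeff (genSer g a) = 0 := by
  simp [genSer, ← coeff_zero_eq_constantCoeff_apply, coeff_monomial]

theorem coeff_genSer_odd {g : ℕ} (a : Fin g → ℂ) {j : ℕ} (hj : j < g) :
    coeff (2 * j + 1) (genSer g a) = a ⟨j, hj⟩ := by
  rw [genSer, map_sum, Finset.sum_eq_single ⟨j, hj⟩]
  · simp
  · intro i _ hi
    rw [coeff_monomial, if_neg fun h => hi (Fin.ext (by dsimp only; omega))]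
  · simp

theorem stmt_6_general (g : ℕ) (α : Fin g → ℂ)
    (a : Fin g → ℂ)
    (ha : ∀ i : Fin g,
      a i = ((2 * (i : ℕ) + 1 : ℂ))⁻¹ * ∑ k : Fin g, (α k) ^ (-(2 * ((i : ℕ) : ℤ) + 1))) :
    ∀ n : ℕ, Odd n → n < 2 * g + 1 →
      PowerSeries.coeff n
        ((∏ k : Fin g, (1 - PowerSeries.C (α k)⁻¹ * PowerSeries.X)) *
          expPS (genSer g a)) = 0 := by
  intro n hn hng
  have hs := constantCoeff_genSer g a
  refine coeff_odd_eq_zero_of_derivative_eq_mul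
    (D := ∑ k, -C (α k)⁻¹ * PowerSeries.mk ((α k)⁻¹ ^ ·) + d⁄dX ℂ (genSer g a)) ?_ ?_ hn hng
  · rw [Derivation.leibniz, smul_eq_mul, smul_eq_mul, derivative_expPS hs,
      Derivation.map_prod_of_eq_mul _ _ fun k _ => derivative_one_sub_C_mul_X _]
    ring
  · intro j hj
    rw [map_add, map_sum, coeff_derivative, coeff_genSer_odd a hj, ha]
    have hzpow : ∀ k, α k ^ (-(2 * (j : ℤ) + 1)) = (α k)⁻¹ ^ (2 * j + 1) := fun k => by
      rw [← inv_zpow']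
      norm_cast
    have hodd : (2 * j + 1 : ℂ) ≠ 0 := by exact_mod_cast Nat.succ_ne_zero (2 * j)
    simp only [hzpow, neg_mul, map_neg, coeff_C_mul, coeff_mk, Finset.sum_neg_distrib]
    push_cast
    rw [mul_right_comm, inv_mul_cancel₀ hodd, one_mul]
    simp only [pow_succ', neg_add_cancel]

theorem stmt_6 (g : ℕ) (hg : 1 ≤ g) (α : Fin g → ℂ) (hα : ∀ k, α k ≠ 0)
    (a : Fin g → ℂ)
    (ha : ∀ i : Fin g,
      a i = ((2 * (i : ℕ) + 1 : ℂ))⁻¹ * ∑ k : Fin g, (α k) ^ (-(2 * ((i : ℕ) : ℤ) + 1))) :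
    ∀ n : ℕ, Odd n → n < 2 * g + 1 →
      PowerSeries.coeff n
        ((∏ k : Fin g, (1 - PowerSeries.C (α k)⁻¹ * PowerSeries.X)) *
          expPS (genSer g a)) = 0 :=
  stmt_6_general g α a ha
end

section
/- Fix an integer g ≥ 1 and a point a⃗ = (a_1, …, a_g) ∈ ℂ^g with det B(a⃗) ≠ 0. Then there exists a unique pair (p, b) of polynomials in ℂ[t] such that: p has degree ≤ g and constant term 1; b has the form b(t) = 1 + Σ_{j=1}^{g−1} b_j t^{2j}; and p(t) ≡ f_g(t; a⃗)·b(t) modulo t^{2g}, where f_g(t; a⃗) := Σ_{n=0}^{2g−1} χ_n(a⃗) t^n. Moreover, the coefficient vector (p_0, p_1, …, p_g) of p equals A(a⃗)·c⃗, where c⃗ ∈ ℂ^g is the vector whose first entry is 1 and whose remaining g−1 entries form the vector −B(a⃗)^{−1}·φ(a⃗). -/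
/-- `χ_n(a)` : the coefficient of `t^n` in `exp(∑_{i=1}^g a_i t^{2i-1})`, with `χ_n = 0`
for `n < 0`. -/
noncomputable def chi (g : ℕ) (a : Fin g → ℂ) (n : ℤ) : ℂ :=
  if 0 ≤ n then PowerSeries.coeff n.toNat (expPS (genSer g a)) else 0

/-- The `g × k` matrix `X_k(a)` whose `(i,j)` entry (1-indexed) is `χ_{2i-j}(a)`. -/
noncomputable def Xmat (g : ℕ) (a : Fin g → ℂ) (k : ℕ) : Matrix (Fin g) (Fin k) ℂ :=
  Matrix.of fun i j => chi g a (2 * ((i : ℕ) : ℤ) + 1 - ((j : ℕ) : ℤ))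

/-- The `(g+1) × g` matrix `A(a)` with (1-indexed) `(i,j)` entry `χ_{i-2j+1}(a)`. -/
noncomputable def Amat (g : ℕ) (a : Fin g → ℂ) : Matrix (Fin (g + 1)) (Fin g) ℂ :=
  Matrix.of fun i j => chi g a (((i : ℕ) : ℤ) - 2 * ((j : ℕ) : ℤ))

/-- The `(g-1) × (g-1)` matrix `B(a)` with (1-indexed) `(i,j)` entry `χ_{g+i-2j}(a)`. -/
noncomputable def Bmat (g : ℕ) (a : Fin g → ℂ) : Matrix (Fin (g - 1)) (Fin (g - 1)) ℂ :=
  Matrix.of fun i j => chi g a ((g : ℤ) + ((i : ℕ) : ℤ) - 2 * ((j : ℕ) : ℤ) - 1)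

/-- The vector `φ(a) = (χ_{g+1}(a), …, χ_{2g-1}(a))`. -/
noncomputable def phiVec (g : ℕ) (a : Fin g → ℂ) : Fin (g - 1) → ℂ :=
  fun i => chi g a ((g : ℤ) + 1 + ((i : ℕ) : ℤ))

/-- The vector `c(a) ∈ ℂ^g` whose first entry is `1` and whose remaining `g-1`
entries form `-B(a)⁻¹·φ(a)`. -/
noncomputable def cVec (g : ℕ) (a : Fin g → ℂ) : Fin g → ℂ :=
  fun j => if h : (j : ℕ) = 0 then 1
    else -(((Bmat g a)⁻¹).mulVec (phiVec g a)) ⟨(j : ℕ) - 1, by have := j.isLt; omega⟩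

/-- The polynomial `f_g(t; a) = ∑_{n=0}^{2g-1} χ_n(a) t^n`. -/
noncomputable def fgPoly (g : ℕ) (a : Fin g → ℂ) : Polynomial ℂ :=
  ∑ n ∈ Finset.range (2 * g), Polynomial.C (chi g a (n : ℤ)) * Polynomial.X ^ n

/-!
Write `b = ∑ⱼ cⱼ t^{2j}`. For `n < 2g` the coefficient of `tⁿ` in `f_g · b` is `∑ⱼ χ_{n-2j} cⱼ`.
Since `deg p ≤ g`, the congruence forces these to vanish for `g < n < 2g`; with `c₀ = 1` this is
exactly the linear system `B · (c₁, …, c_{g-1}) = -φ`, so invertibility of `B` pins `c` down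
to `c⃗`. Then `p` must be the truncation of `f_g · b` at degree `g`, whose coefficients are
`∑ⱼ χ_{i-2j} c⃗ⱼ = (A · c⃗)ᵢ`.
-/

open Polynomial Matrix

lemma chi_of_neg {g : ℕ} (a : Fin g → ℂ) {n : ℤ} (hn : n < 0) : chi g a n = 0 :=
  if_neg (by omega)

lemma chi_zero {g : ℕ} (a : Fin g → ℂ) : chi g a 0 = 1 := by
  simp [chi, expPS]

lemma coeff_fgPoly {g : ℕ} (a : Fin g → ℂ) (m : ℕ) :
    (fgPoly g a).coeff m = if m < 2 * g then chi g a m else 0 := by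
  simp only [fgPoly, finsetSum_coeff, coeff_C_mul_X_pow, Finset.sum_ite_eq, Finset.mem_range]

lemma Fin.sum_univ_eq_add_sum_pred {M : Type*} [AddCommMonoid M] {g : ℕ} (hg : 1 ≤ g)
    (F : Fin g → M) :
    ∑ j, F j = F ⟨0, hg⟩ + ∑ k : Fin (g - 1), F ⟨k + 1, Nat.add_lt_of_lt_sub k.isLt⟩ := by
  obtain ⟨k, rfl⟩ := Nat.exists_eq_add_of_le' hg
  exact Fin.sum_univ_succ F

section EvenPoly

variable {R : Type*} [Semiring R] {g : ℕ}

noncomputable def evenPoly (c : Fin g → R) : R[X] :=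
  ∑ j, C (c j) * X ^ (2 * (j : ℕ))

lemma coeff_evenPoly_two_mul (c : Fin g → R) (r : ℕ) :
    (evenPoly c).coeff (2 * r) = if h : r < g then c ⟨r, h⟩ else 0 := by
  simp only [evenPoly, finsetSum_coeff, coeff_C_mul_X_pow, Nat.mul_left_cancel_iff two_pos]
  split_ifs with h
  · rw [Finset.sum_eq_single ⟨r, h⟩ (fun j _ hj => if_neg fun e => hj (Fin.ext e.symm))
      (by simp), if_pos rfl]
  · exact Finset.sum_eq_zero fun j _ => if_neg (by omega)

lemma coeff_evenPoly_of_odd (c : Fin g → R) {m : ℕ} (hm : Odd m) : (evenPoly c).coeff m = 0 := by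
  simp only [evenPoly, finsetSum_coeff, coeff_C_mul_X_pow]
  obtain ⟨r, rfl⟩ := hm
  exact Finset.sum_eq_zero fun j _ => if_neg (by omega)

lemma degree_evenPoly_le (c : Fin g → R) : (evenPoly c).degree ≤ ↑(2 * g - 2) :=
  (degree_sum_le _ _).trans <| Finset.sup_le fun j _ =>
    (degree_C_mul_X_pow_le _ _).trans <| by exact_mod_cast (by omega : 2 * (j : ℕ) ≤ 2 * g - 2)

lemma eq_evenPoly_of_degree_lt {b : R[X]} (hdeg : b.degree < ↑(2 * g))
    (hodd : ∀ m, Odd m → b.coeff m = 0) :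
    b = evenPoly fun j : Fin g => b.coeff (2 * (j : ℕ)) := by
  ext m
  obtain ⟨r, rfl | rfl⟩ := Nat.even_or_odd' m
  · rw [coeff_evenPoly_two_mul]
    split_ifs with h
    · rfl
    · exact coeff_eq_zero_of_degree_lt (hdeg.trans_le (by exact_mod_cast (by omega)))
  · rw [hodd _ (odd_two_mul_add_one r), coeff_evenPoly_of_odd _ (odd_two_mul_add_one r)]

end EvenPoly

section LinearSystem

variable {g : ℕ} (a : Fin g → ℂ)

def tailVec {α : Type*} (c : Fin g → α) : Fin (g - 1) → α :=
  fun k => c ⟨k + 1, Nat.add_lt_of_lt_sub k.isLt⟩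

lemma coeff_fgPoly_mul_evenPoly (c : Fin g → ℂ) {n : ℕ} (hn : n < 2 * g) :
    (fgPoly g a * evenPoly c).coeff n = ∑ j : Fin g, chi g a (n - 2 * (j : ℕ)) * c j := by
  simp only [evenPoly, Finset.mul_sum, finsetSum_coeff]
  refine Finset.sum_congr rfl fun j _ => ?_
  rw [mul_left_comm, coeff_C_mul, coeff_mul_X_pow', mul_comm]
  split_ifs with h
  · rw [coeff_fgPoly, if_pos (by omega), Nat.cast_sub h]
    push_cast
    rfl
  · rw [chi_of_neg a (by omega), zero_mul]

lemma sum_chi_mul_eq_phiVec_add_Bmat_mulVec (hg : 1 ≤ g) (c : Fin g → ℂ) (i : Fin (g - 1)) :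
    ∑ j : Fin g, chi g a ((g + 1 + i : ℕ) - 2 * (j : ℕ)) * c j
      = c ⟨0, hg⟩ * phiVec g a i + (Bmat g a *ᵥ tailVec c) i := by
  rw [Fin.sum_univ_eq_add_sum_pred hg]
  simp only [phiVec, Bmat, tailVec, Matrix.mulVec, dotProduct, Matrix.of_apply]
  congr 1
  · rw [mul_comm]; congr 2
  · refine Finset.sum_congr rfl fun k _ => ?_
    congr 2; push_cast; ring

lemma Bmat_mulVec_tailVec_cVec (hB : (Bmat g a).det ≠ 0) :
    Bmat g a *ᵥ tailVec (cVec g a) = -phiVec g a := by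
  have htail : tailVec (cVec g a) = -((Bmat g a)⁻¹ *ᵥ phiVec g a) := by
    funext k
    simp [tailVec, cVec]
  rw [htail, Matrix.mulVec_neg, Matrix.mulVec_mulVec,
    Matrix.mul_nonsing_inv _ (isUnit_iff_ne_zero.mpr hB), Matrix.one_mulVec]

lemma eq_cVec_of_Bmat_mulVec (hg : 1 ≤ g) (hB : (Bmat g a).det ≠ 0) {c : Fin g → ℂ}
    (hc0 : c ⟨0, hg⟩ = 1) (hc : Bmat g a *ᵥ tailVec c = -phiVec g a) : c = cVec g a := by
  have : Invertible (Bmat g a) := Matrix.invertibleOfIsUnitDet _ (isUnit_iff_ne_zero.mpr hB)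
  have htail : tailVec c = tailVec (cVec g a) :=
    Matrix.mulVec_injective_of_invertible _ (hc.trans (Bmat_mulVec_tailVec_cVec a hB).symm)
  funext ⟨j, hj⟩
  rcases j with _ | k
  · simp [hc0, cVec]
  · exact congrFun htail ⟨k, by omega⟩

lemma coeff_fgPoly_mul_evenPoly_eq_zero_iff (hg : 1 ≤ g) {c : Fin g → ℂ} (hc0 : c ⟨0, hg⟩ = 1) :
    (∀ n, g < n → n < 2 * g → (fgPoly g a * evenPoly c).coeff n = 0) ↔
      Bmat g a *ᵥ tailVec c = -phiVec g a := by
  have hcoeff (i : Fin (g - 1)) : (fgPoly g a * evenPoly c).coeff (g + 1 + i)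
      = phiVec g a i + (Bmat g a *ᵥ tailVec c) i := by
    rw [coeff_fgPoly_mul_evenPoly a c (by omega), sum_chi_mul_eq_phiVec_add_Bmat_mulVec a hg,
      hc0, one_mul]
  constructor
  · intro h
    funext i
    rw [Pi.neg_apply]
    linear_combination (hcoeff i).symm.trans (h _ (by omega) (by omega))
  · intro h n hgn hn
    obtain ⟨i, rfl⟩ : ∃ i : Fin (g - 1), n = g + 1 + i := ⟨⟨n - g - 1, by omega⟩, by simp; omega⟩
    rw [hcoeff, h, Pi.neg_apply, add_neg_cancel]

end LinearSystem

section Pade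

variable {g : ℕ} (a : Fin g → ℂ)

def IsPadeApproximant (p b : ℂ[X]) : Prop :=
  (p.degree ≤ (g : WithBot ℕ) ∧ p.coeff 0 = 1) ∧
    (b.coeff 0 = 1 ∧ b.degree ≤ ((2 * g - 2 : ℕ) : WithBot ℕ) ∧ ∀ m : ℕ, Odd m → b.coeff m = 0) ∧
    ∀ n : ℕ, n < 2 * g → p.coeff n = (fgPoly g a * b).coeff n

noncomputable def padeDen : ℂ[X] :=
  evenPoly (cVec g a)

noncomputable def padeNum : ℂ[X] :=
  PowerSeries.trunc (g + 1) ((fgPoly g a * padeDen a : ℂ[X]) : PowerSeries ℂ)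

lemma cVec_zero (hg : 1 ≤ g) : cVec g a ⟨0, hg⟩ = 1 := by
  simp [cVec]

lemma coeff_padeDen_zero (hg : 1 ≤ g) : (padeDen a).coeff 0 = 1 := by
  have h := coeff_evenPoly_two_mul (cVec g a) 0
  rwa [mul_zero, dif_pos (show 0 < g from hg), cVec_zero a hg] at h

lemma coeff_padeNum (m : ℕ) :
    (padeNum a).coeff m = if m ≤ g then (fgPoly g a * padeDen a).coeff m else 0 := by
  simp only [padeNum, PowerSeries.coeff_trunc, Polynomial.coeff_coe, Nat.lt_succ_iff]

lemma degree_padeNum_le : (padeNum a).degree ≤ g :=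
  degree_le_of_natDegree_le (Nat.lt_succ_iff.mp (PowerSeries.natDegree_trunc_lt _ g))

lemma isPadeApproximant_padeNum_padeDen (hg : 1 ≤ g) (hB : (Bmat g a).det ≠ 0) :
    IsPadeApproximant a (padeNum a) (padeDen a) := by
  have hvanish := (coeff_fgPoly_mul_evenPoly_eq_zero_iff a hg (cVec_zero a hg)).mpr
    (Bmat_mulVec_tailVec_cVec a hB)
  refine ⟨⟨degree_padeNum_le a, ?_⟩, ⟨coeff_padeDen_zero a hg, degree_evenPoly_le _,
    fun m hm => coeff_evenPoly_of_odd _ hm⟩, fun n hn => ?_⟩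
  · rw [coeff_padeNum, if_pos (Nat.zero_le g), mul_coeff_zero, coeff_padeDen_zero a hg,
      coeff_fgPoly, if_pos (by omega), Nat.cast_zero, chi_zero, one_mul]
  · rw [coeff_padeNum]
    split_ifs with hng
    · rfl
    · exact (hvanish n (by omega) hn).symm

lemma eq_padeDen_of_isPadeApproximant (hg : 1 ≤ g) (hB : (Bmat g a).det ≠ 0) {p b : ℂ[X]}
    (h : IsPadeApproximant a p b) : b = padeDen a := by
  obtain ⟨⟨hp, -⟩, ⟨hb0, hb, hodd⟩, hpb⟩ := h
  have hbc := eq_evenPoly_of_degree_lt (g := g)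
    (hb.trans_lt (by exact_mod_cast (by omega : 2 * g - 2 < 2 * g))) hodd
  set c : Fin g → ℂ := fun j => b.coeff (2 * (j : ℕ))
  have hc0 : c ⟨0, hg⟩ = 1 := hb0
  rw [hbc, padeDen, eq_cVec_of_Bmat_mulVec a hg hB hc0]
  refine (coeff_fgPoly_mul_evenPoly_eq_zero_iff a hg hc0).mp fun n hgn hn => ?_
  rw [← hbc, ← hpb n hn]
  exact coeff_eq_zero_of_degree_lt (hp.trans_lt (by exact_mod_cast hgn))

lemma eq_padeNum_of_isPadeApproximant (hg : 1 ≤ g) (hB : (Bmat g a).det ≠ 0) {p b : ℂ[X]}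
    (h : IsPadeApproximant a p b) : p = padeNum a := by
  ext n
  rw [coeff_padeNum, ← eq_padeDen_of_isPadeApproximant a hg hB h]
  split_ifs with hng
  · exact h.2.2 n (by omega)
  · exact coeff_eq_zero_of_degree_lt (h.1.1.trans_lt (by exact_mod_cast (by omega : g < n)))

lemma coeff_padeNum_eq_Amat_mulVec_cVec (hg : 1 ≤ g) (i : Fin (g + 1)) :
    (padeNum a).coeff i = (Amat g a *ᵥ cVec g a) i := by
  rw [coeff_padeNum, if_pos (Nat.lt_succ_iff.mp i.isLt), padeDen,
    coeff_fgPoly_mul_evenPoly a _ (by omega)]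
  rfl

end Pade

theorem stmt_9 (g : ℕ) (hg : 1 ≤ g) (a : Fin g → ℂ) (hB : (Bmat g a).det ≠ 0) :
    (∃! pb : Polynomial ℂ × Polynomial ℂ,
      (pb.1.degree ≤ (g : WithBot ℕ) ∧ pb.1.coeff 0 = 1) ∧
      (pb.2.coeff 0 = 1 ∧ pb.2.degree ≤ ((2 * g - 2 : ℕ) : WithBot ℕ) ∧
        ∀ m : ℕ, Odd m → pb.2.coeff m = 0) ∧
      (∀ n : ℕ, n < 2 * g → pb.1.coeff n = (fgPoly g a * pb.2).coeff n)) ∧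
    (∀ pb : Polynomial ℂ × Polynomial ℂ,
      ((pb.1.degree ≤ (g : WithBot ℕ) ∧ pb.1.coeff 0 = 1) ∧
       (pb.2.coeff 0 = 1 ∧ pb.2.degree ≤ ((2 * g - 2 : ℕ) : WithBot ℕ) ∧
         ∀ m : ℕ, Odd m → pb.2.coeff m = 0) ∧
       (∀ n : ℕ, n < 2 * g → pb.1.coeff n = (fgPoly g a * pb.2).coeff n)) →
      ∀ i : Fin (g + 1),
        pb.1.coeff (i : ℕ) = (Amat g a).mulVec (cVec g a) i) := by
  refine ⟨⟨(padeNum a, padeDen a), isPadeApproximant_padeNum_padeDen a hg hB, fun pb h => ?_⟩,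
    fun pb h i => ?_⟩
  · exact Prod.ext (eq_padeNum_of_isPadeApproximant a hg hB h)
      (eq_padeDen_of_isPadeApproximant a hg hB h)
  · rw [eq_padeNum_of_isPadeApproximant a hg hB h]
    exact coeff_padeNum_eq_Amat_mulVec_cVec a hg i
end
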